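/- arXiv:math/0511028 — 2 statements merged into one kernel-verified Lean document; each statement's English description precedes it below -/
import Mathlib

section
/- The boundary value problem −r(x)y′(x)+q(x)y(x)=f(x), lim_{|x|→∞} y(x)=0, is correctly solvable in C(ℝ) if and only if ∫_x^∞ (1/r(t)) exp(−∫_x^t q(ξ)/r(ξ) dξ) dt → 0 as |x| → ∞. Moreover, if the problem is correctly solvable in C(ℝ), then S₁ = ∞; and in the correctly solvable case ‖G‖_{C(ℝ)→C(ℝ)} = sup_{x∈ℝ} ∫_x^∞ (1/r(t)) exp(−∫_x^t q(ξ)/r(ξ) dξ) dt. -/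
open MeasureTheory Filter Set Real
open scoped ENNReal NNReal

noncomputable section

/-- `y` is a solution of the boundary value problem `-r·y' + q·y = f` on `ℝ` with
`y → 0` at `±∞`: `y` is continuous, locally absolutely continuous (encoded through the
integral identity, i.e. `y` is the integral of its a.e. derivative `(q·y - f)/r`),
and tends to `0` at both infinities. -/
def IsSolution (r q f y : ℝ → ℝ) : Prop :=
  Continuous y ∧
  (∀ a b : ℝ, y b - y a = ∫ t in a..b, (q t * y t - f t) / r t) ∧
  Tendsto y atBot (nhds 0) ∧ Tendsto y atTop (nhds 0)

/-- Correct solvability of the problem `-r·y' + q·y = f`, `y(±∞) = 0`, in `C(ℝ)`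
(bounded continuous functions with the sup-norm): for every bounded continuous `f`
there is a unique solution `y` (such a solution is automatically bounded and
continuous), and `sup|y| ≤ c·sup|f|` with a constant `c ∈ (0,∞)` independent of `f`. -/
def CorrectlySolvableC (r q : ℝ → ℝ) : Prop :=
  ∃ c : ℝ, 0 < c ∧
    ∀ f : ℝ → ℝ, Continuous f → (∃ M : ℝ, ∀ x, |f x| ≤ M) →
      (∃! y : ℝ → ℝ, IsSolution r q f y) ∧
      ∀ y : ℝ → ℝ, IsSolution r q f y → ∀ x, |y x| ≤ c * ⨆ t, |f t|

/-- `S₁ = ∫_{-∞}^0 q(t)/r(t) dt`, as a (possibly infinite) lower Lebesgue integral. -/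
def S1E (r q : ℝ → ℝ) : ℝ≥0∞ :=
  ∫⁻ t in Set.Iio (0 : ℝ), ENNReal.ofReal (q t / r t)

/-- The operator `(Gf)(x) = ∫_x^∞ (1/r(t)) exp(-∫_x^t q(s)/r(s) ds) f(t) dt`. -/
def G (r q f : ℝ → ℝ) (x : ℝ) : ℝ :=
  ∫ t in Set.Ioi x, (1 / r t) * Real.exp (-(∫ s in x..t, q s / r s)) * f t

/-- `A(x) = ∫_x^∞ (1/r(t)) exp(-∫_x^t q(ξ)/r(ξ) dξ) dt`, with values in `ℝ≥0∞`. -/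
def AE (r q : ℝ → ℝ) (x : ℝ) : ℝ≥0∞ :=
  ∫⁻ t in Set.Ioi x, ENNReal.ofReal ((1 / r t) * Real.exp (-(∫ s in x..t, q s / r s)))

/-- The operator norm of `G : C(ℝ) → C(ℝ)` (equal to `⊤` if `G` is unbounded). -/
def GOpNormC (r q : ℝ → ℝ) : ℝ≥0∞ :=
  sInf {C : ℝ≥0∞ | ∀ f : ℝ → ℝ, Continuous f → (∃ M : ℝ, ∀ x, |f x| ≤ M) →
    ∀ x, ENNReal.ofReal |G r q f x| ≤ C * ENNReal.ofReal (⨆ t, |f t|)}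

/-!
With `Q x = ∫₀ˣ q/r`, the integrating factor `exp (-Q)` turns the equation into
`(y e^{-Q})' = -f e^{-Q} / r`. As `q ≥ 0`, `e^{-Q}` is bounded at `+∞`, so a solution is
determined by `f` (it must be `G f`), and the solution for `f = 1` is exactly
`A x = ∫ₓ^∞ (1/r) e^{-∫ₓᵗ q/r}`. Hence correct solvability forces `A → 0` at `±∞`.
Conversely `|G f| ≤ ‖f‖ A`, which gives existence with the a priori bound, and together
with `G 1 = A` the norm of `G`. If `S₁ < ∞` then `Q` is bounded below on `(-∞, 0]`, so `A`
stays away from `0` at `-∞`. Since `q` is only locally integrable, `Q` is merely absolutely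
continuous and the integrating-factor computations use the fundamental theorem of calculus
for absolutely continuous functions.
-/

namespace AbsolutelyContinuousOnInterval

variable {a b : ℝ}

theorem const_add {f : ℝ → ℝ} (c : ℝ) (hf : AbsolutelyContinuousOnInterval f a b) :
    AbsolutelyContinuousOnInterval (fun x => c + f x) a b := by
  simpa [AbsolutelyContinuousOnInterval, dist_add_left] using hf

theorem comp_lipschitzOnWith {X Y : Type*} [PseudoMetricSpace X] [PseudoMetricSpace Y]
    {f : ℝ → X} {φ : X → Y} {K : ℝ≥0} {s : Set X}
    (hf : AbsolutelyContinuousOnInterval f a b) (hφ : LipschitzOnWith K φ s)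
    (hfs : MapsTo f (uIcc a b) s) : AbsolutelyContinuousOnInterval (φ ∘ f) a b := by
  unfold AbsolutelyContinuousOnInterval at hf ⊢
  refine squeeze_zero' (Eventually.of_forall fun E => Finset.sum_nonneg fun _ _ => dist_nonneg)
    (eventually_inf_principal.2 (Eventually.of_forall fun E hE => ?_))
    (mul_zero (K : ℝ) ▸ hf.const_mul (K : ℝ))
  rw [Finset.mul_sum]
  exact Finset.sum_le_sum fun i hi =>
    hφ.dist_le_mul _ (hfs (hE.1 i hi).1) _ (hfs (hE.1 i hi).2)

theorem comp_contDiff {f φ : ℝ → ℝ} (hf : AbsolutelyContinuousOnInterval f a b)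
    (hφ : ContDiff ℝ 1 φ) : AbsolutelyContinuousOnInterval (φ ∘ f) a b := by
  obtain ⟨C, hC⟩ := hf.exists_bound
  obtain ⟨K, hK⟩ := hφ.contDiffOn.exists_lipschitzOnWith (s := Icc (-C) C) (by decide)
    (convex_Icc _ _) isCompact_Icc
  exact hf.comp_lipschitzOnWith hK fun x hx => abs_le.1 (hC x hx)

theorem integral_eq_sub_of_ae_hasDerivAt {f f' : ℝ → ℝ}
    (hf : AbsolutelyContinuousOnInterval f a b)
    (hf' : ∀ᵐ x, x ∈ uIcc a b → HasDerivAt f (f' x) x) :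
    ∫ x in a..b, f' x = f b - f a := by
  rw [← hf.integral_deriv_eq_sub]
  refine intervalIntegral.integral_congr_ae ?_
  filter_upwards [hf'] with x hx hxab
  exact (hx (uIoc_subset_uIcc hxab)).deriv.symm

end AbsolutelyContinuousOnInterval

theorem MeasureTheory.LocallyIntegrable.intervalIntegrable {f : ℝ → ℝ}
    (hf : LocallyIntegrable f volume) (a b : ℝ) : IntervalIntegrable f volume a b :=
  (hf.integrableOn_isCompact isCompact_uIcc).intervalIntegrable

theorem MeasureTheory.LocallyIntegrable.absolutelyContinuousOnInterval_intervalIntegral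
    {f : ℝ → ℝ} (hf : LocallyIntegrable f volume) (c a b : ℝ) :
    AbsolutelyContinuousOnInterval (fun x => ∫ t in c..x, f t) a b := by
  have h := ((hf.intervalIntegrable a b).absolutelyContinuousOnInterval_intervalIntegral
    left_mem_uIcc).const_add (∫ t in c..a, f t)
  simpa only [intervalIntegral.integral_add_adjacent_intervals (hf.intervalIntegrable c a)
    (hf.intervalIntegrable a _)] using h

theorem MeasureTheory.LocallyIntegrable.div_continuous {f g : ℝ → ℝ}
    (hf : LocallyIntegrable f volume) (hg : Continuous g) (hg0 : ∀ x, g x ≠ 0) :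
    LocallyIntegrable (fun x => f x / g x) volume := by
  simpa only [div_eq_mul_inv] using hf.mul_continuous (g := fun x => (g x)⁻¹) (hg.inv₀ hg0)

theorem tendsto_zero_of_ofReal_abs_le {α : Type*} {l : Filter α} {u : α → ℝ} {v : α → ℝ≥0∞}
    (hv : Tendsto v l (nhds 0)) (h : ∀ x, ENNReal.ofReal |u x| ≤ v x) :
    Tendsto u l (nhds 0) := by
  have h0 : Tendsto (fun x => ENNReal.ofReal |u x|) l (nhds 0) :=
    tendsto_of_tendsto_of_tendsto_of_le_of_le tendsto_const_nhds hv (fun _ => zero_le) h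
  have h1 := (ENNReal.tendsto_toReal ENNReal.zero_ne_top).comp h0
  simp only [Function.comp_def, ENNReal.toReal_ofReal (abs_nonneg _), ENNReal.toReal_zero] at h1
  exact tendsto_zero_iff_abs_tendsto_zero u |>.2 h1

namespace FirstOrderBVP

def Q (r q : ℝ → ℝ) (x : ℝ) : ℝ := ∫ t in (0 : ℝ)..x, q t / r t

-- The kernel of `G` and `AE` factors as `exp (Q x) * weight t`, see `kernel_eq`.
def weight (r q : ℝ → ℝ) (t : ℝ) : ℝ := exp (-Q r q t) / r t

variable {r q : ℝ → ℝ}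

theorem Q_sub_Q (hg : LocallyIntegrable (fun t => q t / r t) volume) (x t : ℝ) :
    Q r q t - Q r q x = ∫ s in x..t, q s / r s :=
  intervalIntegral.integral_interval_sub_left (hg.intervalIntegrable _ _)
    (hg.intervalIntegrable _ _)

theorem continuous_Q (hg : LocallyIntegrable (fun t => q t / r t) volume) :
    Continuous (Q r q) :=
  intervalIntegral.continuous_primitive hg.intervalIntegrable 0

theorem monotone_Q (hg : LocallyIntegrable (fun t => q t / r t) volume)
    (hg0 : ∀ t, 0 ≤ q t / r t) : Monotone (Q r q) := fun x t hxt =>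
  sub_nonneg.1 <| Q_sub_Q hg x t ▸ intervalIntegral.integral_nonneg hxt fun s _ => hg0 s

theorem ae_hasDerivAt_Q (hg : LocallyIntegrable (fun t => q t / r t) volume) :
    ∀ᵐ x, HasDerivAt (Q r q) (q x / r x) x := by
  filter_upwards [LocallyIntegrable.ae_hasDerivAt_integral hg] with x hx using hx 0

theorem absolutelyContinuousOnInterval_exp_comp_Q
    (hg : LocallyIntegrable (fun t => q t / r t) volume) (c a b : ℝ) :
    AbsolutelyContinuousOnInterval (fun x => exp (c * Q r q x)) a b :=
  AbsolutelyContinuousOnInterval.comp_contDiff (f := Q r q) (φ := fun u => exp (c * u))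
    (hg.absolutelyContinuousOnInterval_intervalIntegral 0 a b)
    (contDiff_exp.comp (contDiff_const.mul contDiff_id))

theorem continuous_weight (hr : Continuous r) (hr0 : ∀ x, r x ≠ 0)
    (hg : LocallyIntegrable (fun t => q t / r t) volume) : Continuous (weight r q) :=
  (continuous_Q hg).neg.rexp.div hr hr0

theorem weight_pos (hrpos : ∀ x, 0 < r x) (t : ℝ) : 0 < weight r q t :=
  div_pos (exp_pos _) (hrpos t)

theorem kernel_eq (hg : LocallyIntegrable (fun t => q t / r t) volume) (x t : ℝ) :
    1 / r t * exp (-∫ s in x..t, q s / r s) = exp (Q r q x) * weight r q t := by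
  rw [← Q_sub_Q hg, weight, neg_sub, exp_sub, exp_neg]
  ring

theorem AE_eq (hg : LocallyIntegrable (fun t => q t / r t) volume) (x : ℝ) :
    AE r q x = ENNReal.ofReal (exp (Q r q x)) *
      ∫⁻ t in Ioi x, ENNReal.ofReal (weight r q t) := by
  simp_rw [AE, kernel_eq hg, ENNReal.ofReal_mul (exp_pos _).le]
  exact lintegral_const_mul' _ _ ENNReal.ofReal_ne_top

theorem G_eq (hg : LocallyIntegrable (fun t => q t / r t) volume) (f : ℝ → ℝ) (x : ℝ) :
    G r q f x = exp (Q r q x) * ∫ t in Ioi x, weight r q t * f t := by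
  simp_rw [G, kernel_eq hg, mul_assoc]
  exact integral_const_mul _ _

theorem ofReal_abs_G_le (hrpos : ∀ x, 0 < r x) {f : ℝ → ℝ} {M : ℝ} (hfM : ∀ t, |f t| ≤ M)
    (x : ℝ) : ENNReal.ofReal |G r q f x| ≤ AE r q x * ENNReal.ofReal M := by
  rw [← Real.enorm_eq_ofReal_abs, AE, ← lintegral_mul_const' _ _ ENNReal.ofReal_ne_top]
  refine (enorm_integral_le_lintegral_enorm _).trans (lintegral_mono fun t => ?_)
  have hk : 0 ≤ 1 / r t * exp (-∫ s in x..t, q s / r s) :=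
    mul_nonneg (one_div_pos.2 (hrpos t)).le (exp_pos _).le
  rw [enorm_mul, Real.enorm_eq_ofReal hk, Real.enorm_eq_ofReal_abs]
  gcongr
  exact hfM t

theorem lintegral_weight_ne_top_iff (hg : LocallyIntegrable (fun t => q t / r t) volume)
    (x : ℝ) : ∫⁻ t in Ioi x, ENNReal.ofReal (weight r q t) ≠ ⊤ ↔ AE r q x ≠ ⊤ := by
  simp [AE_eq hg, ENNReal.mul_eq_top, exp_pos]

theorem sub_eq_integral_weight_mul (hr : Continuous r) (hr0 : ∀ x, r x ≠ 0)
    (hq : LocallyIntegrable q volume) {f y : ℝ → ℝ} (hf : Continuous f) (hy : Continuous y)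
    (hsol : ∀ a b : ℝ, y b - y a = ∫ t in a..b, (q t * y t - f t) / r t) (a b : ℝ) :
    y a * exp (-Q r q a) - y b * exp (-Q r q b) = ∫ t in a..b, weight r q t * f t := by
  have hg := hq.div_continuous hr hr0
  set w : ℝ → ℝ := fun t => (q t * y t - f t) / r t
  have hw : LocallyIntegrable w volume :=
    ((hq.mul_continuous hy).sub hf.locallyIntegrable).div_continuous hr hr0
  have hy_eq : y = fun x => y 0 + ∫ t in (0 : ℝ)..x, w t :=
    funext fun x => by linarith [hsol 0 x]
  have hAC : AbsolutelyContinuousOnInterval (fun x => y x * exp (-Q r q x)) a b := by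
    have hyAC : AbsolutelyContinuousOnInterval y a b := by
      rw [hy_eq]
      exact (hw.absolutelyContinuousOnInterval_intervalIntegral 0 a b).const_add _
    simpa only [neg_one_mul] using
      hyAC.fun_mul (absolutelyContinuousOnInterval_exp_comp_Q hg (-1) a b)
  have hderiv : ∀ᵐ x, x ∈ uIcc a b →
      HasDerivAt (fun x => y x * exp (-Q r q x)) (-(weight r q x * f x)) x := by
    filter_upwards [ae_hasDerivAt_Q hg, LocallyIntegrable.ae_hasDerivAt_integral hw]
      with x hQ hyx _
    have hy' : HasDerivAt y (w x) x := hy_eq ▸ (hyx 0).const_add (y 0)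
    have hE : HasDerivAt (fun x => exp (-Q r q x)) (exp (-Q r q x) * -(q x / r x)) x :=
      hQ.neg.exp
    refine (hy'.fun_mul hE).congr_deriv ?_
    simp only [w, weight]
    field_simp [hr0 x]
    ring
  rw [← neg_sub, ← hAC.integral_eq_sub_of_ae_hasDerivAt hderiv, intervalIntegral.integral_neg,
    neg_neg]

theorem tendsto_mul_exp_neg_Q (hg : LocallyIntegrable (fun t => q t / r t) volume)
    (hg0 : ∀ t, 0 ≤ q t / r t) {y : ℝ → ℝ} (hy : Tendsto y atTop (nhds 0)) :
    Tendsto (fun b => y b * exp (-Q r q b)) atTop (nhds 0) := by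
  refine hy.zero_mul_isBoundedUnder_le (isBoundedUnder_of_eventually_le (a := exp (-Q r q 0)) ?_)
  filter_upwards [eventually_ge_atTop 0] with b hb
  rw [Function.comp_apply, Real.norm_of_nonneg (exp_pos _).le]
  exact exp_le_exp.2 (neg_le_neg (monotone_Q hg hg0 hb))

theorem _root_.IsSolution.tendsto_integral_weight_mul (hr : Continuous r) (hrpos : ∀ x, 0 < r x)
    (hq : LocallyIntegrable q volume) (hqnn : ∀ x, 0 ≤ q x) {f y : ℝ → ℝ} (hf : Continuous f)
    (hy : IsSolution r q f y) (a : ℝ) :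
    Tendsto (fun b => ∫ t in a..b, weight r q t * f t) atTop
      (nhds (y a * exp (-Q r q a))) := by
  have hlim := (tendsto_const_nhds (x := y a * exp (-Q r q a))).sub
    (tendsto_mul_exp_neg_Q (hq.div_continuous hr fun x => (hrpos x).ne')
      (fun t => div_nonneg (hqnn t) (hrpos t).le) hy.2.2.2)
  rw [sub_zero] at hlim
  exact hlim.congr (sub_eq_integral_weight_mul hr (fun x => (hrpos x).ne') hq hf hy.1 hy.2.1 a)

theorem _root_.IsSolution.unique (hr : Continuous r) (hrpos : ∀ x, 0 < r x)
    (hq : LocallyIntegrable q volume) (hqnn : ∀ x, 0 ≤ q x) {f y z : ℝ → ℝ} (hf : Continuous f)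
    (hy : IsSolution r q f y) (hz : IsSolution r q f z) : y = z :=
  funext fun a => mul_right_cancel₀ (exp_pos _).ne' <|
    tendsto_nhds_unique (hy.tendsto_integral_weight_mul hr hrpos hq hqnn hf a)
      (hz.tendsto_integral_weight_mul hr hrpos hq hqnn hf a)

theorem _root_.IsSolution.AE_eq_ofReal (hr : Continuous r) (hrpos : ∀ x, 0 < r x)
    (hq : LocallyIntegrable q volume) (hqnn : ∀ x, 0 ≤ q x) {y : ℝ → ℝ}
    (hy : IsSolution r q (fun _ => 1) y) (x : ℝ) : AE r q x = ENNReal.ofReal (y x) := by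
  have hg := hq.div_continuous hr fun x => (hrpos x).ne'
  have hlim := hy.tendsto_integral_weight_mul hr hrpos hq hqnn continuous_const x
  simp only [mul_one] at hlim
  have hint : IntegrableOn (weight r q) (Ioi x) :=
    integrableOn_Ioi_of_intervalIntegral_norm_tendsto _ x
      (fun _ => (continuous_weight hr (fun x => (hrpos x).ne') hg).integrableOn_Ioc) tendsto_id
      (by simpa only [id, Real.norm_of_nonneg (weight_pos hrpos _).le] using hlim)
  have hval := tendsto_nhds_unique (intervalIntegral_tendsto_integral_Ioi x hint tendsto_id) hlim
  rw [AE_eq hg, ← ofReal_integral_eq_lintegral_ofReal hint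
      (ae_of_all _ fun t => (weight_pos hrpos t).le), hval, ← ENNReal.ofReal_mul (exp_pos _).le,
    mul_left_comm, ← exp_add, add_neg_cancel, exp_zero, mul_one]

theorem tendsto_AE_of_correctlySolvableC (hr : Continuous r) (hrpos : ∀ x, 0 < r x)
    (hq : LocallyIntegrable q volume) (hqnn : ∀ x, 0 ≤ q x) (h : CorrectlySolvableC r q) :
    Tendsto (AE r q) atTop (nhds 0) ∧ Tendsto (AE r q) atBot (nhds 0) := by
  obtain ⟨_, -, hc⟩ := h
  obtain ⟨⟨y, hy, -⟩, -⟩ := hc (fun _ => 1) continuous_const ⟨1, fun _ => by simp⟩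
  rw [funext (hy.AE_eq_ofReal hr hrpos hq hqnn), ← ENNReal.ofReal_zero]
  exact ⟨ENNReal.tendsto_ofReal hy.2.2.2, ENNReal.tendsto_ofReal hy.2.2.1⟩

theorem integrableOn_weight (hr : Continuous r) (hrpos : ∀ x, 0 < r x)
    (hg : LocallyIntegrable (fun t => q t / r t) volume) {x : ℝ} (hx : AE r q x ≠ ⊤) :
    IntegrableOn (weight r q) (Ioi x) :=
  (lintegral_ofReal_ne_top_iff_integrable
    (continuous_weight hr (fun x => (hrpos x).ne') hg).aestronglyMeasurable
    (ae_of_all _ fun t => (weight_pos hrpos t).le)).1 ((lintegral_weight_ne_top_iff hg x).2 hx)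

theorem AE_ne_top_of_tendsto_atBot (hg : LocallyIntegrable (fun t => q t / r t) volume)
    (hbot : Tendsto (AE r q) atBot (nhds 0)) (x : ℝ) : AE r q x ≠ ⊤ := by
  obtain ⟨x₁, hx₁⟩ := (hbot.eventually (gt_mem_nhds zero_lt_one)).exists_forall_of_atBot
  rw [← lintegral_weight_ne_top_iff hg]
  refine ne_top_of_le_ne_top ?_ (lintegral_mono_set (Ioi_subset_Ioi (min_le_left x x₁)))
  exact (lintegral_weight_ne_top_iff hg _).2 (hx₁ _ (min_le_right _ _)).ne_top

theorem exists_AE_le (hg : LocallyIntegrable (fun t => q t / r t) volume)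
    (hg0 : ∀ t, 0 ≤ q t / r t) (htop : Tendsto (AE r q) atTop (nhds 0))
    (hbot : Tendsto (AE r q) atBot (nhds 0)) : ∃ C, C ≠ ⊤ ∧ ∀ x, AE r q x ≤ C := by
  obtain ⟨x₀, hx₀⟩ := (htop.eventually (gt_mem_nhds zero_lt_one)).exists_forall_of_atTop
  obtain ⟨x₁, hx₁⟩ := (hbot.eventually (gt_mem_nhds zero_lt_one)).exists_forall_of_atBot
  refine ⟨1 + ENNReal.ofReal (exp (Q r q x₀)) * ∫⁻ t in Ioi x₁, ENNReal.ofReal (weight r q t),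
    ENNReal.add_ne_top.2 ⟨ENNReal.one_ne_top, ENNReal.mul_ne_top ENNReal.ofReal_ne_top
      ((lintegral_weight_ne_top_iff hg x₁).2 (hx₁ x₁ le_rfl).ne_top)⟩, fun x => ?_⟩
  rcases le_total x x₁ with hx | hx
  · exact (hx₁ x hx).le.trans le_self_add
  rcases le_total x₀ x with hx' | hx'
  · exact (hx₀ x hx').le.trans le_self_add
  refine le_add_left ?_
  rw [AE_eq hg]
  gcongr
  exact monotone_Q hg hg0 hx'

theorem G_eq_exp_Q_mul_sub (hg : LocallyIntegrable (fun t => q t / r t) volume) {f : ℝ → ℝ}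
    (hint : ∀ x, IntegrableOn (fun t => weight r q t * f t) (Ioi x)) (x : ℝ) :
    G r q f x = exp (Q r q x) *
      ((∫ t in Ioi 0, weight r q t * f t) - ∫ t in (0 : ℝ)..x, weight r q t * f t) := by
  rw [G_eq hg, ← intervalIntegral.integral_Ioi_sub_Ioi' (hint 0) (hint x), sub_sub_cancel]

theorem isSolution_G (hr : Continuous r) (hrpos : ∀ x, 0 < r x)
    (hg : LocallyIntegrable (fun t => q t / r t) volume)
    (htop : Tendsto (AE r q) atTop (nhds 0)) (hbot : Tendsto (AE r q) atBot (nhds 0))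
    {f : ℝ → ℝ} (hf : Continuous f) {M : ℝ} (hfM : ∀ t, |f t| ≤ M) :
    IsSolution r q f (G r q f) := by
  set k : ℝ → ℝ := fun t => weight r q t * f t
  have hk : Continuous k := (continuous_weight hr (fun x => (hrpos x).ne') hg).mul hf
  have hint : ∀ x, IntegrableOn k (Ioi x) := fun x =>
    (integrableOn_weight hr hrpos hg (AE_ne_top_of_tendsto_atBot hg hbot x)).mul_bdd
      hf.aestronglyMeasurable (ae_of_all _ fun t => (Real.norm_eq_abs (f t)).trans_le (hfM t))
  have hG : G r q f = fun x => exp (Q r q x) * ((∫ t in Ioi 0, k t) - ∫ t in (0 : ℝ)..x, k t) :=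
    funext (G_eq_exp_Q_mul_sub hg hint)
  have hGM : ∀ x, ENNReal.ofReal |G r q f x| ≤ AE r q x * ENNReal.ofReal M :=
    ofReal_abs_G_le hrpos hfM
  refine ⟨?_, fun a b => ?_, tendsto_zero_of_ofReal_abs_le ?_ hGM,
    tendsto_zero_of_ofReal_abs_le ?_ hGM⟩
  · rw [hG]
    exact (continuous_Q hg).rexp.mul
      (continuous_const.sub (intervalIntegral.continuous_primitive hk.intervalIntegrable 0))
  · have hAC : AbsolutelyContinuousOnInterval (G r q f) a b := by
      rw [hG]
      simpa only [one_mul, ← sub_eq_add_neg] using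
        (absolutelyContinuousOnInterval_exp_comp_Q hg 1 a b).fun_mul
          ((hk.locallyIntegrable.absolutelyContinuousOnInterval_intervalIntegral 0 a b).fun_neg
            |>.const_add (∫ t in Ioi 0, k t))
    refine (hAC.integral_eq_sub_of_ae_hasDerivAt ?_).symm
    filter_upwards [ae_hasDerivAt_Q hg] with x hQ _
    rw [hG]
    refine (hQ.exp.fun_mul
      ((hk.integral_hasStrictDerivAt 0 x).hasDerivAt.const_sub _)).congr_deriv ?_
    simp only [k, weight, exp_neg]
    field_simp [(hrpos x).ne']
    ring
  · simpa using ENNReal.Tendsto.mul_const hbot (Or.inr ENNReal.ofReal_ne_top)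
  · simpa using ENNReal.Tendsto.mul_const htop (Or.inr ENNReal.ofReal_ne_top)

theorem correctlySolvableC_of_tendsto (hr : Continuous r) (hrpos : ∀ x, 0 < r x)
    (hq : LocallyIntegrable q volume) (hqnn : ∀ x, 0 ≤ q x)
    (htop : Tendsto (AE r q) atTop (nhds 0)) (hbot : Tendsto (AE r q) atBot (nhds 0)) :
    CorrectlySolvableC r q := by
  have hg := hq.div_continuous hr fun x => (hrpos x).ne'
  obtain ⟨C, hC, hAE⟩ := exists_AE_le hg (fun t => div_nonneg (hqnn t) (hrpos t).le) htop hbot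
  refine ⟨C.toReal + 1, by positivity, fun f hf ⟨M, hM⟩ => ?_⟩
  have hfM : ∀ t, |f t| ≤ ⨆ t, |f t| := le_ciSup ⟨M, forall_mem_range.2 hM⟩
  have hG := isSolution_G hr hrpos hg htop hbot hf hfM
  refine ⟨⟨G r q f, hG, fun y hy => hy.unique hr hrpos hq hqnn hf hG⟩, fun y hy x => ?_⟩
  rw [hy.unique hr hrpos hq hqnn hf hG]
  have h : ENNReal.ofReal |G r q f x| ≤ C * ENNReal.ofReal (⨆ t, |f t|) :=
    (ofReal_abs_G_le hrpos hfM x).trans (by gcongr; exact hAE x)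
  rw [ENNReal.ofReal_le_iff_le_toReal (ENNReal.mul_ne_top hC ENNReal.ofReal_ne_top),
    ENNReal.toReal_mul, ENNReal.toReal_ofReal ((abs_nonneg _).trans (hfM 0))] at h
  exact h.trans (mul_le_mul_of_nonneg_right (le_add_of_nonneg_right zero_le_one)
    ((abs_nonneg _).trans (hfM 0)))

theorem neg_toReal_S1E_le_Q (hg : LocallyIntegrable (fun t => q t / r t) volume)
    (hg0 : ∀ t, 0 ≤ q t / r t) (hS : S1E r q ≠ ⊤) {x : ℝ} (hx : x ≤ 0) :
    -(S1E r q).toReal ≤ Q r q x := by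
  have hQ0 : Q r q 0 = 0 := intervalIntegral.integral_same
  have hQx : Q r q x = -∫ s in Ioo x 0, q s / r s := by
    rw [← integral_Ioc_eq_integral_Ioo, ← intervalIntegral.integral_of_le hx, ← Q_sub_Q hg, hQ0,
      zero_sub, neg_neg]
  rw [hQx, neg_le_neg_iff, ← ENNReal.ofReal_le_iff_le_toReal hS,
    ofReal_integral_eq_lintegral_ofReal ((hg.integrableOn_isCompact isCompact_Icc).mono_set
      Ioo_subset_Icc_self) (ae_of_all _ fun s => hg0 s)]
  exact lintegral_mono_set fun s hs => hs.2

theorem S1E_eq_top_of_tendsto_atBot (hr : Continuous r) (hrpos : ∀ x, 0 < r x)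
    (hg : LocallyIntegrable (fun t => q t / r t) volume) (hg0 : ∀ t, 0 ≤ q t / r t)
    (hbot : Tendsto (AE r q) atBot (nhds 0)) : S1E r q = ⊤ := by
  by_contra hS
  have hpos : 0 < ∫⁻ t in Ioi 0, ENNReal.ofReal (weight r q t) := by
    rw [setLIntegral_pos_iff
      (continuous_weight hr (fun x => (hrpos x).ne') hg).measurable.ennreal_ofReal]
    simp [Function.support, weight_pos hrpos]
  have hlow : ∀ x ≤ 0, ENNReal.ofReal (exp (-(S1E r q).toReal)) *
      ∫⁻ t in Ioi 0, ENNReal.ofReal (weight r q t) ≤ AE r q x := fun x hx => by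
    rw [AE_eq hg]
    gcongr
    exact neg_toReal_S1E_le_Q hg hg0 hS hx
  exact (ENNReal.mul_pos (ENNReal.ofReal_pos.2 (exp_pos _)).ne' hpos.ne').not_ge
    (ge_of_tendsto hbot (eventually_atBot.2 ⟨0, hlow⟩))

theorem ofReal_G_one (hr : Continuous r) (hrpos : ∀ x, 0 < r x)
    (hg : LocallyIntegrable (fun t => q t / r t) volume) {x : ℝ} (hx : AE r q x ≠ ⊤) :
    ENNReal.ofReal (G r q (fun _ => 1) x) = AE r q x := by
  simp only [G_eq hg, mul_one]
  rw [ENNReal.ofReal_mul (exp_pos _).le, ofReal_integral_eq_lintegral_ofReal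
    (integrableOn_weight hr hrpos hg hx) (ae_of_all _ fun t => (weight_pos hrpos t).le), AE_eq hg]

theorem GOpNormC_eq_iSup_AE (hr : Continuous r) (hrpos : ∀ x, 0 < r x)
    (hg : LocallyIntegrable (fun t => q t / r t) volume) (hAE : ∀ x, AE r q x ≠ ⊤) :
    GOpNormC r q = ⨆ x, AE r q x := by
  refine le_antisymm (sInf_le fun f _ ⟨M, hM⟩ x => ?_) (le_sInf fun C hC => iSup_le fun x => ?_)
  · have hfM : ∀ t, |f t| ≤ ⨆ t, |f t| := le_ciSup ⟨M, forall_mem_range.2 hM⟩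
    exact (ofReal_abs_G_le hrpos hfM x).trans (by gcongr; exact le_iSup _ x)
  · calc AE r q x = ENNReal.ofReal (G r q (fun _ => 1) x) := (ofReal_G_one hr hrpos hg (hAE x)).symm
      _ ≤ ENNReal.ofReal |G r q (fun _ => 1) x| := ENNReal.ofReal_le_ofReal (le_abs_self _)
      _ ≤ C * ENNReal.ofReal (⨆ _ : ℝ, |(1 : ℝ)|) :=
        hC (fun _ => 1) continuous_const ⟨1, fun _ => by simp⟩ x
      _ = C := by simp

end FirstOrderBVP

open FirstOrderBVP

theorem stmt12 (r q : ℝ → ℝ) (hr : Continuous r) (hrpos : ∀ x, 0 < r x)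
    (hq : LocallyIntegrable q volume) (hqnn : ∀ x, 0 ≤ q x) :
    (CorrectlySolvableC r q ↔
      (Tendsto (AE r q) atTop (nhds 0) ∧ Tendsto (AE r q) atBot (nhds 0))) ∧
    (CorrectlySolvableC r q → S1E r q = ⊤) ∧
    (CorrectlySolvableC r q → GOpNormC r q = ⨆ x : ℝ, AE r q x) := by
  have hg := hq.div_continuous hr fun x => (hrpos x).ne'
  have hg0 : ∀ t, 0 ≤ q t / r t := fun t => div_nonneg (hqnn t) (hrpos t).le
  have hiff : CorrectlySolvableC r q ↔
      Tendsto (AE r q) atTop (nhds 0) ∧ Tendsto (AE r q) atBot (nhds 0) :=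
    ⟨tendsto_AE_of_correctlySolvableC hr hrpos hq hqnn,
      fun h => correctlySolvableC_of_tendsto hr hrpos hq hqnn h.1 h.2⟩
  refine ⟨hiff, fun h => S1E_eq_top_of_tendsto_atBot hr hrpos hg hg0 (hiff.1 h).2,
    fun h => GOpNormC_eq_iSup_AE hr hrpos hg (AE_ne_top_of_tendsto_atBot hg (hiff.1 h).2)⟩
end
end

section
/- Suppose there exists a ∈ (0,∞) with inf_{x∈ℝ} ∫_{x−a}^{x+a} q(t)/r(t) dt > 0, and suppose moreover that q(x) → 0 as x → −∞ or q(x) → 0 as x → +∞. Then for every p ∈ [1,∞] the boundary value problem −r(x)y′(x)+q(x)y(x)=f(x), lim_{|x|→∞} y(x)=0, is not correctly solvable in L_p(ℝ). -/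
open MeasureTheory Filter Set Real
open scoped ENNReal NNReal

noncomputable section

/-- Correct solvability of the problem `-r·y' + q·y = f`, `y(±∞) = 0`, in `L_p(ℝ)`:
for every `f ∈ L_p(ℝ)` there is a unique solution `y ∈ L_p(ℝ)`, and the solution
satisfies `‖y‖_p ≤ c‖f‖_p` with a constant `c ∈ (0,∞)` independent of `f`. -/
def CorrectlySolvableLp (r q : ℝ → ℝ) (p : ℝ≥0∞) : Prop :=
  ∃ c : ℝ≥0∞, 0 < c ∧ c < ⊤ ∧
    ∀ f : ℝ → ℝ, MemLp f p volume →
      (∃! y : ℝ → ℝ, IsSolution r q f y ∧ MemLp y p volume) ∧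
      ∀ y : ℝ → ℝ, IsSolution r q f y → MemLp y p volume →
        eLpNorm y p volume ≤ c * eLpNorm f p volume

/-! Write `Q` for the primitive of `q / r`. For continuous `f ≥ 0` supported in `[α, b]`,
variation of constants gives the solution `y x = e^{Q x} ∫_x^b e^{-Q t} f t / r t dt`, which
vanishes on `[b, ∞)`; as `q` is only locally integrable, `e^Q` is merely absolutely continuous,
so the product rule is used in that class. The window condition `B ≤ Q (x + 2a) - Q x` makes `Q`
grow linearly, hence `y` decays exponentially at `-∞` and lies in every `L_p`.

Where `q ≤ ε` on an interval of length `2a + 3`, let `f` be a trapezoid equal to `1` on its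
middle part. Comparing `Q` with `ε ∫ 1/r` gives `y ≥ (1 - e^{-B}) / ε` on a unit interval,
while the norm of `f` does not depend on `ε`; letting `ε → 0` defeats every estimate
`‖y‖ ≤ c ‖f‖`. -/

theorem LipschitzOnWith.comp_absolutelyContinuousOnInterval {X Y : Type*} [PseudoMetricSpace X]
    [PseudoMetricSpace Y] {φ : X → Y} {f : ℝ → X} {K : ℝ≥0} {s : Set X} {a b : ℝ}
    (hφ : LipschitzOnWith K φ s) (hf : AbsolutelyContinuousOnInterval f a b)
    (hfs : MapsTo f (uIcc a b) s) : AbsolutelyContinuousOnInterval (φ ∘ f) a b := by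
  rw [absolutelyContinuousOnInterval_iff] at hf ⊢
  intro ε hε
  obtain ⟨δ, hδ, hfδ⟩ := hf (ε / (K + 1)) (by positivity)
  refine ⟨δ, hδ, fun E hE hEδ => ?_⟩
  calc ∑ i ∈ Finset.range E.1, dist ((φ ∘ f) (E.2 i).1) ((φ ∘ f) (E.2 i).2)
      ≤ ∑ i ∈ Finset.range E.1, K * dist (f (E.2 i).1) (f (E.2 i).2) :=
        Finset.sum_le_sum fun i hi =>
          hφ.dist_le_mul _ (hfs (hE.1 i hi).1) _ (hfs (hE.1 i hi).2)
    _ ≤ K * (ε / (K + 1)) := by rw [← Finset.mul_sum]; gcongr; exact (hfδ E hE hEδ).le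
    _ < ε := by rw [mul_div_assoc', div_lt_iff₀ (by positivity)]; nlinarith

theorem absolutelyContinuousOnInterval_exp_primitive {g : ℝ → ℝ}
    (hg : LocallyIntegrable g volume) (a b : ℝ) :
    AbsolutelyContinuousOnInterval (fun x => exp (∫ t in 0..x, g t)) a b := by
  have hint : ∀ u v : ℝ, IntervalIntegrable g volume u v := fun u v =>
    (hg.integrableOn_isCompact isCompact_uIcc).intervalIntegrable
  have hP : AbsolutelyContinuousOnInterval (fun x => ∫ t in 0..x, g t) a b := by
    refine ((hint (min a (min b 0)) (max a (max b 0))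
      ).absolutelyContinuousOnInterval_intervalIntegral ?_).mono (uIcc_subset_uIcc ?_ ?_) <;>
    simp only [uIcc, mem_Icc] <;> constructor <;> simp
  obtain ⟨M, hM⟩ := ((isCompact_uIcc (a := a) (b := b)).image_of_continuousOn
    (intervalIntegral.continuous_primitive hint 0).continuousOn).bddAbove
  have hexp : LipschitzOnWith (exp M).toNNReal exp (Iic M) :=
    (convex_Iic M).lipschitzOnWith_of_nnnorm_hasDerivWithin_le
      (fun x _ => (hasDerivAt_exp x).hasDerivWithinAt) fun x hx => by
        rw [← NNReal.coe_le_coe, coe_nnnorm, Real.norm_of_nonneg (exp_pos x).le,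
          Real.coe_toNNReal _ (exp_pos M).le]
        exact exp_le_exp.2 hx
  exact hexp.comp_absolutelyContinuousOnInterval hP fun x hx => hM (mem_image_of_mem _ hx)

theorem integral_mul_exp_primitive_mul_add {g u : ℝ → ℝ} (hg : LocallyIntegrable g volume)
    {a b : ℝ} (hu : AbsolutelyContinuousOnInterval u a b) :
    ∫ x in a..b, g x * exp (∫ t in 0..x, g t) * u x + exp (∫ t in 0..x, g t) * deriv u x
      = exp (∫ t in 0..b, g t) * u b - exp (∫ t in 0..a, g t) * u a := by
  rw [← (absolutelyContinuousOnInterval_exp_primitive hg a b).integral_deriv_mul_eq_sub hu]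
  refine intervalIntegral.integral_congr_ae ?_
  filter_upwards [LocallyIntegrable.ae_hasDerivAt_integral hg] with x hx _
  rw [((hx 0).exp).deriv, mul_comm (g x)]

theorem add_nat_mul_le_of_forall_le_sub {F : ℝ → ℝ} {h B : ℝ}
    (hinc : ∀ x, B ≤ F (x + h) - F x) (x : ℝ) (n : ℕ) : F (x - n * h) + n * B ≤ F x := by
  induction n generalizing x with
  | zero => simp
  | succ n ih =>
    have hstep := hinc (x - (n + 1) * h)
    rw [show x - (n + 1) * h + h = x - n * h by ring] at hstep
    push_cast
    linarith [ih x]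

theorem Monotone.add_div_mul_le_of_forall_le_sub {F : ℝ → ℝ} (hF : Monotone F) {h B : ℝ}
    (hh : 0 < h) (hB : 0 ≤ B) (hinc : ∀ x, B ≤ F (x + h) - F x) {x x₀ : ℝ} (hx : x ≤ x₀) :
    F x + B / h * (x₀ - x) ≤ F x₀ + B := by
  set n := ⌊(x₀ - x) / h⌋₊
  have hn : (x₀ - x) / h - 1 ≤ n := (Nat.sub_one_lt_floor _).le
  have hnh : n * h ≤ x₀ - x := (le_div_iff₀ hh).1 (Nat.floor_le (div_nonneg (by linarith) hh.le))
  calc F x + B / h * (x₀ - x) = F x + ((x₀ - x) / h - 1) * B + B := by field_simp; ring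
    _ ≤ F (x₀ - n * h) + n * B + B := by gcongr; exact hF (by linarith)
    _ ≤ F x₀ + B := by linarith [add_nat_mul_le_of_forall_le_sub hinc x₀ n]

theorem memLp_indicator_Iic_exp_mul {l : ℝ} (hl : 0 < l) (b : ℝ) {p : ℝ≥0∞} (hp : p ≠ ⊤) :
    MemLp ((Iic b).indicator fun x => exp (l * x)) p volume := by
  have hmeas : AEStronglyMeasurable ((Iic b).indicator fun x => exp (l * x)) volume :=
    ((continuous_const.mul continuous_id).rexp.aestronglyMeasurable).indicator measurableSet_Iic
  rcases eq_or_ne p 0 with rfl | hp0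
  · exact memLp_zero_iff_aestronglyMeasurable.2 hmeas
  rw [← integrable_norm_rpow_iff hmeas hp0 hp]
  have hpos : 0 < p.toReal := ENNReal.toReal_pos hp0 hp
  refine ((integrable_indicator_iff measurableSet_Iic).2
    (integrableOn_exp_mul_Iic (mul_pos hpos hl) b)).congr (ae_of_all _ fun x => ?_)
  by_cases hx : x ∈ Iic b
  · simp only [indicator_of_mem hx, Real.norm_of_nonneg (exp_pos _).le, ← exp_mul]
    ring_nf
  · simp [indicator_of_notMem hx, zero_rpow hpos.ne']

theorem integral_exp_neg_mul_primitive_mul {ρ : ℝ → ℝ} (hρ : Continuous ρ) {ε : ℝ} (hε : ε ≠ 0)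
    (x s : ℝ) :
    ∫ t in x..s, exp (-(ε * ∫ τ in x..t, ρ τ)) * ρ t
      = (1 - exp (-(ε * ∫ τ in x..s, ρ τ))) / ε := by
  have hderiv : ∀ t, HasDerivAt (fun t => (1 - exp (-(ε * ∫ τ in x..t, ρ τ))) / ε)
      (exp (-(ε * ∫ τ in x..t, ρ τ)) * ρ t) t := fun t => by
    have hexponent : HasDerivAt (fun t => -(ε * ∫ τ in x..t, ρ τ)) (-(ε * ρ t)) t :=
      ((hρ.integral_hasStrictDerivAt x t).hasDerivAt.const_mul ε).neg
    exact ((hexponent.exp.const_sub 1).div_const ε).congr_deriv (by field_simp)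
  rw [intervalIntegral.integral_eq_sub_of_hasDerivAt (fun t _ => hderiv t)
    (Continuous.intervalIntegrable (by fun_prop) _ _)]
  simp only [intervalIntegral.integral_same, mul_zero, neg_zero, exp_zero]
  ring

theorem MeasureTheory.LocallyIntegrable.div_continuous_s15 {μ : Measure ℝ} {q r : ℝ → ℝ}
    (hq : LocallyIntegrable q μ) (hr : Continuous r) (hr0 : ∀ x, r x ≠ 0) :
    LocallyIntegrable (fun x => q x / r x) μ := by
  simpa only [div_eq_mul_inv] using hq.mul_continuous (g := fun x => (r x)⁻¹) (hr.inv₀ hr0)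

def qrPrimitive (r q : ℝ → ℝ) (x : ℝ) : ℝ := ∫ t in 0..x, q t / r t

def windowInf (r q : ℝ → ℝ) (a : ℝ) : ℝ := ⨅ c : ℝ, ∫ t in (c - a)..(c + a), q t / r t

def decayingSolution (r q f : ℝ → ℝ) (b x : ℝ) : ℝ :=
  exp (qrPrimitive r q x) * ∫ t in x..b, exp (-qrPrimitive r q t) * f t / r t

section qrPrimitive

variable {r q : ℝ → ℝ}

theorem intervalIntegrable_div (hr : Continuous r) (hrpos : ∀ x, 0 < r x)
    (hq : LocallyIntegrable q volume) (u v : ℝ) :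
    IntervalIntegrable (fun t => q t / r t) volume u v :=
  ((hq.div_continuous_s15 hr fun x => (hrpos x).ne').integrableOn_isCompact
    isCompact_uIcc).intervalIntegrable

theorem continuous_qrPrimitive (hr : Continuous r) (hrpos : ∀ x, 0 < r x)
    (hq : LocallyIntegrable q volume) : Continuous (qrPrimitive r q) :=
  intervalIntegral.continuous_primitive (intervalIntegrable_div hr hrpos hq) 0

theorem qrPrimitive_sub (hr : Continuous r) (hrpos : ∀ x, 0 < r x)
    (hq : LocallyIntegrable q volume) (u v : ℝ) :
    qrPrimitive r q v - qrPrimitive r q u = ∫ t in u..v, q t / r t :=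
  intervalIntegral.integral_interval_sub_left (intervalIntegrable_div hr hrpos hq 0 v)
    (intervalIntegrable_div hr hrpos hq 0 u)

theorem monotone_qrPrimitive (hr : Continuous r) (hrpos : ∀ x, 0 < r x)
    (hq : LocallyIntegrable q volume) (hqnn : ∀ x, 0 ≤ q x) : Monotone (qrPrimitive r q) :=
  fun u v huv => sub_nonneg.1 <| (qrPrimitive_sub hr hrpos hq u v).symm ▸
    intervalIntegral.integral_nonneg huv fun t _ => div_nonneg (hqnn t) (hrpos t).le

theorem windowInf_le_qrPrimitive_add_sub (hr : Continuous r) (hrpos : ∀ x, 0 < r x)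
    (hq : LocallyIntegrable q volume) (hqnn : ∀ x, 0 ≤ q x) {a : ℝ} (ha : 0 < a) (x : ℝ) :
    windowInf r q a ≤ qrPrimitive r q (x + 2 * a) - qrPrimitive r q x := by
  have hbdd : BddBelow (range fun c : ℝ => ∫ t in (c - a)..(c + a), q t / r t) :=
    ⟨0, forall_mem_range.2 fun c => intervalIntegral.integral_nonneg (by linarith)
      fun t _ => div_nonneg (hqnn t) (hrpos t).le⟩
  rw [qrPrimitive_sub hr hrpos hq]
  refine (ciInf_le hbdd (x + a)).trans_eq ?_
  congr 1 <;> ring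

theorem qrPrimitive_add_le (hr : Continuous r) (hrpos : ∀ x, 0 < r x)
    (hq : LocallyIntegrable q volume) (hqnn : ∀ x, 0 ≤ q x) {a : ℝ} (ha : 0 < a)
    {x x₀ : ℝ} (hx : x ≤ x₀) :
    qrPrimitive r q x + windowInf r q a / (2 * a) * (x₀ - x)
      ≤ qrPrimitive r q x₀ + windowInf r q a :=
  (monotone_qrPrimitive hr hrpos hq hqnn).add_div_mul_le_of_forall_le_sub (by linarith)
    (le_ciInf fun c => intervalIntegral.integral_nonneg (by linarith)
      fun t _ => div_nonneg (hqnn t) (hrpos t).le)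
    (windowInf_le_qrPrimitive_add_sub hr hrpos hq hqnn ha) hx

theorem tendsto_qrPrimitive_atBot (hr : Continuous r) (hrpos : ∀ x, 0 < r x)
    (hq : LocallyIntegrable q volume) (hqnn : ∀ x, 0 ≤ q x) {a : ℝ} (ha : 0 < a)
    (hB : 0 < windowInf r q a) : Tendsto (qrPrimitive r q) atBot atBot := by
  refine tendsto_atBot_mono' _ ?_ (tendsto_atBot_add_const_right _
    (qrPrimitive r q 0 + windowInf r q a)
    (tendsto_id.const_mul_atBot (by positivity : 0 < windowInf r q a / (2 * a))))
  filter_upwards [eventually_le_atBot 0] with x hx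
  have := qrPrimitive_add_le hr hrpos hq hqnn ha hx
  simp only [id]
  linarith

end qrPrimitive

section decayingSolution

variable {r q f : ℝ → ℝ} {α b : ℝ}

theorem continuous_exp_neg_qrPrimitive_mul_div (hr : Continuous r) (hrpos : ∀ x, 0 < r x)
    (hq : LocallyIntegrable q volume) (hf : Continuous f) :
    Continuous fun t => exp (-qrPrimitive r q t) * f t / r t :=
  ((continuous_qrPrimitive hr hrpos hq).neg.rexp.mul hf).div hr fun x => (hrpos x).ne'

theorem hasDerivAt_integral_exp_neg_qrPrimitive_mul_div (hr : Continuous r)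
    (hrpos : ∀ x, 0 < r x) (hq : LocallyIntegrable q volume) (hf : Continuous f) (b x : ℝ) :
    HasDerivAt (fun x => ∫ t in x..b, exp (-qrPrimitive r q t) * f t / r t)
      (-(exp (-qrPrimitive r q x) * f x / r x)) x :=
  have hh := continuous_exp_neg_qrPrimitive_mul_div hr hrpos hq hf
  intervalIntegral.integral_hasDerivAt_left (hh.intervalIntegrable _ _)
    hh.aestronglyMeasurable.stronglyMeasurableAtFilter hh.continuousAt

theorem decayingSolution_of_le (hfb : ∀ t, b ≤ t → f t = 0) {x : ℝ} (hx : b ≤ x) :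
    decayingSolution r q f b x = 0 := by
  rw [decayingSolution, intervalIntegral.integral_congr (g := fun _ => 0),
    intervalIntegral.integral_zero, mul_zero]
  intro t ht
  rw [uIcc_of_ge hx] at ht
  simp [hfb t ht.1]

theorem decayingSolution_of_le_left (hr : Continuous r) (hrpos : ∀ x, 0 < r x)
    (hq : LocallyIntegrable q volume) (hf : Continuous f) (hfα : ∀ t ≤ α, f t = 0) {x : ℝ}
    (hx : x ≤ α) :
    decayingSolution r q f b x
      = exp (qrPrimitive r q x) * ∫ t in α..b, exp (-qrPrimitive r q t) * f t / r t := by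
  have hh := continuous_exp_neg_qrPrimitive_mul_div hr hrpos hq hf
  rw [decayingSolution, ← intervalIntegral.integral_add_adjacent_intervals
    (hh.intervalIntegrable x α) (hh.intervalIntegrable α b),
    intervalIntegral.integral_congr (a := x) (g := fun _ => 0), intervalIntegral.integral_zero,
    zero_add]
  intro t ht
  rw [uIcc_of_le hx] at ht
  simp [hfα t ht.2]

theorem isSolution_decayingSolution (hr : Continuous r) (hrpos : ∀ x, 0 < r x)
    (hq : LocallyIntegrable q volume) (hQ : Tendsto (qrPrimitive r q) atBot atBot)
    (hf : Continuous f) (hfα : ∀ t ≤ α, f t = 0) (hfb : ∀ t, b ≤ t → f t = 0) :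
    IsSolution r q f (decayingSolution r q f b) := by
  set u := fun x => ∫ t in x..b, exp (-qrPrimitive r q t) * f t / r t
  have hu := hasDerivAt_integral_exp_neg_qrPrimitive_mul_div hr hrpos hq hf b
  have hu_deriv : ∀ x, deriv u x = -(exp (-qrPrimitive r q x) * f x / r x) :=
    fun x => (hu x).deriv
  have hu_diff : Differentiable ℝ u := fun x => (hu x).differentiableAt
  have hu_C1 : ContDiff ℝ 1 u := contDiff_one_iff_deriv.2
    ⟨hu_diff, (continuous_exp_neg_qrPrimitive_mul_div hr hrpos hq hf).neg.congr fun x =>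
      (hu_deriv x).symm⟩
  refine ⟨(continuous_qrPrimitive hr hrpos hq).rexp.mul hu_diff.continuous,
    fun v w => ?_, ?_, ?_⟩
  · calc decayingSolution r q f b w - decayingSolution r q f b v
        = ∫ x in v..w, q x / r x * exp (qrPrimitive r q x) * u x
            + exp (qrPrimitive r q x) * deriv u x :=
          (integral_mul_exp_primitive_mul_add (hq.div_continuous_s15 hr fun x => (hrpos x).ne')
            hu_C1.contDiffOn.absolutelyContinuousOnInterval).symm
      _ = _ := intervalIntegral.integral_congr fun x _ => by
          change _ = (q x * (exp (qrPrimitive r q x) * u x) - f x) / r x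
          rw [hu_deriv x, exp_neg]
          field_simp
          ring
  · refine Tendsto.congr' ?_ (by simpa using (tendsto_exp_atBot.comp hQ).mul_const (u α))
    filter_upwards [eventually_le_atBot α] with x hx
    exact (decayingSolution_of_le_left hr hrpos hq hf hfα hx).symm
  · exact tendsto_const_nhds.congr' <| (eventually_ge_atTop b).mono fun x hx =>
      (decayingSolution_of_le hfb hx).symm

theorem decayingSolution_nonneg (hrpos : ∀ x, 0 < r x) (hf0 : ∀ t, 0 ≤ f t)
    (hfb : ∀ t, b ≤ t → f t = 0) (x : ℝ) : 0 ≤ decayingSolution r q f b x := by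
  rcases le_total x b with hx | hx
  · exact mul_nonneg (exp_pos _).le <| intervalIntegral.integral_nonneg hx fun t _ =>
      div_nonneg (mul_nonneg (exp_pos _).le (hf0 t)) (hrpos t).le
  · rw [decayingSolution_of_le hfb hx]

theorem decayingSolution_le (hr : Continuous r) (hrpos : ∀ x, 0 < r x)
    (hq : LocallyIntegrable q volume) (hf : Continuous f) (hf0 : ∀ t, 0 ≤ f t)
    (hfα : ∀ t ≤ α, f t = 0) {x : ℝ} (hx : x ≤ b) :
    decayingSolution r q f b x
      ≤ exp (qrPrimitive r q x) * ∫ t in α..b, exp (-qrPrimitive r q t) * f t / r t := by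
  rcases le_total x α with hxα | hαx
  · exact (decayingSolution_of_le_left hr hrpos hq hf hfα hxα).le
  · refine mul_le_mul_of_nonneg_left (intervalIntegral.integral_mono_interval hαx hx le_rfl
      (ae_of_all _ fun t => div_nonneg (mul_nonneg (exp_pos _).le (hf0 t)) (hrpos t).le)
      ((continuous_exp_neg_qrPrimitive_mul_div hr hrpos hq hf).intervalIntegrable _ _))
      (exp_pos _).le

theorem memLp_decayingSolution (hr : Continuous r) (hrpos : ∀ x, 0 < r x)
    (hq : LocallyIntegrable q volume) (hqnn : ∀ x, 0 ≤ q x) {a : ℝ} (ha : 0 < a)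
    (hB : 0 < windowInf r q a) (hf : Continuous f)
    (hf0 : ∀ t, 0 ≤ f t) (hαb : α ≤ b) (hfα : ∀ t ≤ α, f t = 0) (hfb : ∀ t, b ≤ t → f t = 0)
    {p : ℝ≥0∞} (hp : p ≠ ⊤) : MemLp (decayingSolution r q f b) p volume := by
  set B := windowInf r q a
  set K := ∫ t in α..b, exp (-qrPrimitive r q t) * f t / r t
  set l := B / (2 * a)
  refine (memLp_indicator_Iic_exp_mul (by positivity : 0 < l) b hp).of_le_mul
    (c := K * exp (qrPrimitive r q b + B - l * b))
    (isSolution_decayingSolution hr hrpos hq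
      (tendsto_qrPrimitive_atBot hr hrpos hq hqnn ha hB) hf hfα hfb).1.aestronglyMeasurable
    (ae_of_all _ fun x => ?_)
  rw [Real.norm_of_nonneg (decayingSolution_nonneg hrpos hf0 hfb x)]
  rcases le_or_gt x b with hx | hx
  · have hK : 0 ≤ K := intervalIntegral.integral_nonneg hαb fun t _ =>
      div_nonneg (mul_nonneg (exp_pos _).le (hf0 t)) (hrpos t).le
    have hQx := qrPrimitive_add_le hr hrpos hq hqnn ha hx
    rw [indicator_of_mem (mem_Iic.2 hx), Real.norm_of_nonneg (exp_pos _).le, mul_assoc,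
      ← exp_add, mul_comm K]
    refine (decayingSolution_le hr hrpos hq hf hf0 hfα hx).trans ?_
    gcongr
    linarith
  · rw [decayingSolution_of_le hfb hx.le,
      indicator_of_notMem (show x ∉ Iic b from not_le.2 hx), norm_zero, mul_zero]

theorem le_decayingSolution (hr : Continuous r) (hrpos : ∀ x, 0 < r x)
    (hq : LocallyIntegrable q volume) (hf : Continuous f) (hf0 : ∀ t, 0 ≤ f t) {x s ε : ℝ}
    (hε : 0 < ε) (hxs : x ≤ s) (hsb : s ≤ b) (hf1 : ∀ t ∈ Icc x s, f t = 1)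
    (hqε : ∀ t ∈ Icc x s, q t ≤ ε) :
    (1 - exp (-(qrPrimitive r q s - qrPrimitive r q x))) / ε ≤ decayingSolution r q f b x := by
  have hρ : Continuous fun t => (r t)⁻¹ := hr.inv₀ fun t => (hrpos t).ne'
  have hh := continuous_exp_neg_qrPrimitive_mul_div hr hrpos hq hf
  have hcmp : ∀ t ∈ Icc x s,
      qrPrimitive r q t - qrPrimitive r q x ≤ ε * ∫ τ in x..t, (r τ)⁻¹ := fun t ht => by
    rw [qrPrimitive_sub hr hrpos hq, ← intervalIntegral.integral_const_mul]
    refine intervalIntegral.integral_mono_on ht.1 (intervalIntegrable_div hr hrpos hq x t)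
      ((continuous_const.mul hρ).intervalIntegrable _ _) fun τ hτ => ?_
    rw [div_eq_mul_inv]
    exact mul_le_mul_of_nonneg_right (hqε τ ⟨hτ.1, hτ.2.trans ht.2⟩) (inv_nonneg.2 (hrpos τ).le)
  calc (1 - exp (-(qrPrimitive r q s - qrPrimitive r q x))) / ε
      ≤ (1 - exp (-(ε * ∫ τ in x..s, (r τ)⁻¹))) / ε := by
        gcongr; exact hcmp s ⟨hxs, le_rfl⟩
    _ = ∫ t in x..s, exp (-(ε * ∫ τ in x..t, (r τ)⁻¹)) * (r t)⁻¹ :=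
        (integral_exp_neg_mul_primitive_mul hρ hε.ne' x s).symm
    _ ≤ ∫ t in x..s, exp (qrPrimitive r q x) * (exp (-qrPrimitive r q t) * f t / r t) := by
        refine intervalIntegral.integral_mono_on hxs (Continuous.intervalIntegrable
          (by fun_prop (disch := intros; exact (hrpos _).ne')) _ _)
          ((continuous_const.mul hh).intervalIntegrable _ _) fun t ht => ?_
        rw [hf1 t ht, mul_one, div_eq_mul_inv, ← mul_assoc, ← exp_add]
        exact mul_le_mul_of_nonneg_right (exp_le_exp.2 (by linarith [hcmp t ht]))
          (inv_nonneg.2 (hrpos t).le)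
    _ ≤ ∫ t in x..b, exp (qrPrimitive r q x) * (exp (-qrPrimitive r q t) * f t / r t) :=
        intervalIntegral.integral_mono_interval le_rfl hxs hsb
          (ae_of_all _ fun t => mul_nonneg (exp_pos _).le
            (div_nonneg (mul_nonneg (exp_pos _).le (hf0 t)) (hrpos t).le))
          ((continuous_const.mul hh).intervalIntegrable _ _)
    _ = decayingSolution r q f b x := intervalIntegral.integral_const_mul _ _

end decayingSolution

def trapezoid (α β t : ℝ) : ℝ := max 0 (min 1 (min (t - α + 1) (β + 1 - t)))

section trapezoid

variable {α β : ℝ}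

theorem continuous_trapezoid (α β : ℝ) : Continuous (trapezoid α β) := by
  unfold trapezoid; fun_prop

theorem trapezoid_nonneg (t : ℝ) : 0 ≤ trapezoid α β t := le_max_left _ _

theorem trapezoid_le_one (t : ℝ) : trapezoid α β t ≤ 1 := max_le zero_le_one (min_le_left _ _)

theorem trapezoid_eq_one {t : ℝ} (ht : t ∈ Icc α β) : trapezoid α β t = 1 := by
  rw [trapezoid, min_eq_left (le_min (by linarith [ht.1]) (by linarith [ht.2])),
    max_eq_right zero_le_one]

theorem trapezoid_eq_zero {t : ℝ} (ht : t ∉ Ioo (α - 1) (β + 1)) : trapezoid α β t = 0 := by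
  refine max_eq_left (min_le_of_right_le ?_)
  rw [mem_Ioo, not_and_or, not_lt, not_lt] at ht
  rcases ht with ht | ht
  · exact min_le_of_left_le (by linarith)
  · exact min_le_of_right_le (by linarith)

end trapezoid

theorem exists_forall_Icc_le_of_tendsto {q : ℝ → ℝ}
    (hq0 : Tendsto q atBot (nhds 0) ∨ Tendsto q atTop (nhds 0)) (L : ℝ) {ε : ℝ} (hε : 0 < ε) :
    ∃ α, ∀ t ∈ Icc α (α + L), q t ≤ ε := by
  rcases hq0 with h | h
  · obtain ⟨M, hM⟩ := eventually_atBot.1 (h.eventually_le_const hε)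
    exact ⟨M - L, fun t ht => hM t (by linarith [ht.2])⟩
  · obtain ⟨M, hM⟩ := eventually_atTop.1 (h.eventually_le_const hε)
    exact ⟨M, fun t ht => hM t ht.1⟩

section notCorrectlySolvable

variable {r q : ℝ → ℝ}

theorem exists_isSolution_forall_Icc_ge (hr : Continuous r) (hrpos : ∀ x, 0 < r x)
    (hq : LocallyIntegrable q volume) (hqnn : ∀ x, 0 ≤ q x) {a : ℝ} (ha : 0 < a)
    (hB : 0 < windowInf r q a) (hq0 : Tendsto q atBot (nhds 0) ∨ Tendsto q atTop (nhds 0)) (M : ℝ) :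
    ∃ α : ℝ, ∃ f y : ℝ → ℝ, Continuous f ∧ (∀ t, |f t| ≤ 1) ∧
      (∀ t, ‖f t‖ ≤ ‖(Icc α (α + (2 * a + 3))).indicator (fun _ => (1 : ℝ)) t‖) ∧
      IsSolution r q f y ∧ (∀ p : ℝ≥0∞, p ≠ ⊤ → MemLp y p volume) ∧
      ∀ x ∈ Icc (α + 1) (α + 2), M ≤ y x := by
  set B := windowInf r q a
  have hκ : 0 < 1 - exp (-B) := sub_pos.2 (exp_lt_one_iff.2 (neg_lt_zero.2 hB))
  set ε := (1 - exp (-B)) / (|M| + 1)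
  have hε : 0 < ε := by positivity
  obtain ⟨α, hα⟩ := exists_forall_Icc_le_of_tendsto hq0 (2 * a + 3) hε
  set f := trapezoid (α + 1) (α + 2 * a + 2)
  have hf0 : ∀ t, 0 ≤ f t := trapezoid_nonneg
  have hf_out : ∀ t ∉ Ioo α (α + (2 * a + 3)), f t = 0 := fun t ht =>
    trapezoid_eq_zero (by
      rwa [show α + 1 - 1 = α by ring, show α + 2 * a + 2 + 1 = α + (2 * a + 3) by ring])
  have hfα : ∀ t ≤ α, f t = 0 := fun t ht => hf_out t fun h => not_le.2 h.1 ht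
  have hfb : ∀ t, α + (2 * a + 3) ≤ t → f t = 0 := fun t ht => hf_out t fun h => not_le.2 h.2 ht
  refine ⟨α, f, decayingSolution r q f (α + (2 * a + 3)), continuous_trapezoid _ _,
    fun t => abs_le.2 ⟨by linarith [hf0 t], trapezoid_le_one t⟩, fun t => ?_,
    isSolution_decayingSolution hr hrpos hq (tendsto_qrPrimitive_atBot hr hrpos hq hqnn ha hB)
      (continuous_trapezoid _ _) hfα hfb,
    fun p hp => memLp_decayingSolution hr hrpos hq hqnn ha hB (continuous_trapezoid _ _) hf0
      (by linarith) hfα hfb hp, fun x hx => ?_⟩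
  · by_cases ht : t ∈ Icc α (α + (2 * a + 3))
    · rw [indicator_of_mem ht, Real.norm_of_nonneg (hf0 t), norm_one]
      exact trapezoid_le_one t
    · rw [hf_out t fun h => ht (Ioo_subset_Icc_self h), norm_zero]
      exact norm_nonneg _
  · have hlow := le_decayingSolution (b := α + (2 * a + 3)) hr hrpos hq (continuous_trapezoid _ _)
      hf0 hε (s := x + 2 * a) (by linarith) (by linarith [hx.2])
      (fun t ht => trapezoid_eq_one ⟨by linarith [hx.1, ht.1], by linarith [hx.2, ht.2]⟩)
      (fun t ht => hα t ⟨by linarith [hx.1, ht.1], by linarith [hx.2, ht.2]⟩)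
    have hwindow := windowInf_le_qrPrimitive_add_sub hr hrpos hq hqnn ha x
    calc M ≤ |M| + 1 := by linarith [le_abs_self M]
      _ = (1 - exp (-B)) / ε := (div_div_cancel₀ hκ.ne').symm
      _ ≤ (1 - exp (-(qrPrimitive r q (x + 2 * a) - qrPrimitive r q x))) / ε := by gcongr
      _ ≤ _ := hlow

theorem not_correctlySolvableLp (hr : Continuous r) (hrpos : ∀ x, 0 < r x)
    (hq : LocallyIntegrable q volume) (hqnn : ∀ x, 0 ≤ q x) {a : ℝ} (ha : 0 < a)
    (hB : 0 < windowInf r q a) (hq0 : Tendsto q atBot (nhds 0) ∨ Tendsto q atTop (nhds 0))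
    {p : ℝ≥0∞} (hp0 : p ≠ 0) (hp_top : p ≠ ⊤) : ¬ CorrectlySolvableLp r q p := by
  rintro ⟨c, -, hc, hsolv⟩
  set N := c * ENNReal.ofReal (2 * a + 3) ^ (1 / p.toReal)
  have hN : N ≠ ⊤ := ENNReal.mul_ne_top hc.ne
    (ENNReal.rpow_ne_top_of_nonneg (by positivity) ENNReal.ofReal_ne_top)
  obtain ⟨α, f, y, hf, -, hf_ind, hy, hyLp, hyM⟩ :=
    exists_isSolution_forall_Icc_ge hr hrpos hq hqnn ha hB hq0 (N.toReal + 1)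
  have hf_norm : eLpNorm f p volume ≤ ENNReal.ofReal (2 * a + 3) ^ (1 / p.toReal) :=
    (eLpNorm_mono hf_ind).trans ((eLpNorm_indicator_const_le _ p).trans_eq (by simp))
  have hy_norm : ENNReal.ofReal (N.toReal + 1) ≤ eLpNorm y p volume := by
    calc ENNReal.ofReal (N.toReal + 1)
        = eLpNorm ((Icc (α + 1) (α + 2)).indicator fun _ => N.toReal + 1) p volume := by
          rw [eLpNorm_indicator_const measurableSet_Icc hp0 hp_top, Real.volume_Icc,
            show α + 2 - (α + 1) = 1 by ring, ENNReal.ofReal_one, ENNReal.one_rpow, mul_one,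
            Real.enorm_of_nonneg (by positivity)]
      _ ≤ eLpNorm y p volume := eLpNorm_mono fun x => by
          by_cases hx : x ∈ Icc (α + 1) (α + 2)
          · rw [indicator_of_mem hx, Real.norm_of_nonneg (by positivity)]
            exact (hyM x hx).trans (le_abs_self _)
          · rw [indicator_of_notMem hx, norm_zero]
            exact norm_nonneg _
  have hfLp : MemLp f p volume :=
    (memLp_indicator_const p measurableSet_Icc 1 (Or.inr measure_Icc_lt_top.ne)).of_le
      hf.aestronglyMeasurable (ae_of_all _ hf_ind)
  have hN_le : ENNReal.ofReal (N.toReal + 1) ≤ N :=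
    hy_norm.trans (((hsolv f hfLp).2 y hy (hyLp p hp_top)).trans (mul_le_mul_right hf_norm c))
  rw [ENNReal.ofReal_add ENNReal.toReal_nonneg zero_le_one, ENNReal.ofReal_toReal hN,
    ENNReal.ofReal_one] at hN_le
  exact not_le.2 (ENNReal.lt_add_right hN one_ne_zero) hN_le

theorem not_correctlySolvableC (hr : Continuous r) (hrpos : ∀ x, 0 < r x)
    (hq : LocallyIntegrable q volume) (hqnn : ∀ x, 0 ≤ q x) {a : ℝ} (ha : 0 < a)
    (hB : 0 < windowInf r q a) (hq0 : Tendsto q atBot (nhds 0) ∨ Tendsto q atTop (nhds 0)) :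
    ¬ CorrectlySolvableC r q := by
  rintro ⟨c, hc, hsolv⟩
  obtain ⟨α, f, y, hf, hf1, -, hy, -, hyM⟩ :=
    exists_isSolution_forall_Icc_ge hr hrpos hq hqnn ha hB hq0 (c + 1)
  have hsup : ⨆ t, |f t| ≤ 1 := ciSup_le hf1
  have hy_le := (hsolv f hf ⟨1, hf1⟩).2 y hy (α + 1)
  have hy_ge := hyM (α + 1) ⟨le_rfl, by linarith⟩
  nlinarith [le_abs_self (y (α + 1)), mul_le_mul_of_nonneg_left hsup hc.le]

end notCorrectlySolvable

theorem stmt15 (r q : ℝ → ℝ) (hr : Continuous r) (hrpos : ∀ x, 0 < r x)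
    (hq : LocallyIntegrable q volume) (hqnn : ∀ x, 0 ≤ q x)
    (a : ℝ) (ha : 0 < a) (hB : 0 < ⨅ x : ℝ, ∫ t in (x - a)..(x + a), q t / r t)
    (hq0 : Tendsto q atBot (nhds 0) ∨ Tendsto q atTop (nhds 0)) :
    ∀ p : ℝ≥0∞, 1 ≤ p →
      (p ≠ ⊤ → ¬ CorrectlySolvableLp r q p) ∧
      (p = ⊤ → ¬ CorrectlySolvableC r q) := by
  intro p hp
  exact ⟨not_correctlySolvableLp hr hrpos hq hqnn ha hB hq0 (zero_lt_one.trans_le hp).ne',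
    fun _ => not_correctlySolvableC hr hrpos hq hqnn ha hB hq0⟩
end
end
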